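/- arXiv:2407.09941 — 3 statements merged into one kernel-verified Lean document; each statement's English description precedes it below -/
import Mathlib

section
/- Fix L ≥ 1, N ≥ 0 and parameters A_t ∈ ℝ^{N×N}, b_t, c_t ∈ ℝ^N for t = 0,…,L−1. For an input x ∈ ℝ^L define hidden states h_0 = x_0 b_0 and h_{t+1} = A_{t+1} h_t + x_{t+1} b_{t+1}, and outputs y_t = c_tᵀ h_t. Let S be the parametric N-semiseparable matrix determined by these parameters. Then (y_0,…,y_{L−1}) = S x (matrix–vector product); i.e., the state space model acts on its input as multiplication by a semiseparable mixer matrix. -/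
open Matrix

/-- `Aprod A i j = A i * A (i-1) * ⋯ * A (j+1)`, the ordered product `A^×_{i:j}`;
it equals the identity when `i = j` (and also, by convention, when `i < j`). -/
def Aprod {N : ℕ} (A : ℕ → Matrix (Fin N) (Fin N) ℝ) : ℕ → ℕ → Matrix (Fin N) (Fin N) ℝ
  | 0, _ => 1
  | i + 1, j => if j ≤ i then A (i + 1) * Aprod A i j else 1

/-- The parametric `N`-semiseparable `L × L` matrix with parameters `A, b, c`:
`S i j = cᵢᵀ A^×_{i:j} bⱼ` for `i ≥ j` and `0` for `i < j`. -/
def semisep (L : ℕ) {N : ℕ} (A : ℕ → Matrix (Fin N) (Fin N) ℝ)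
    (b c : ℕ → Fin N → ℝ) : Matrix (Fin L) (Fin L) ℝ :=
  Matrix.of fun i j =>
    if (j : ℕ) ≤ (i : ℕ) then c (i : ℕ) ⬝ᵥ (Aprod A (i : ℕ) (j : ℕ)) *ᵥ b (j : ℕ) else 0

lemma Aprod_self {N : ℕ} (A : ℕ → Matrix (Fin N) (Fin N) ℝ) (i : ℕ) :
    Aprod A i i = 1 := by
  cases i with
  | zero => rfl
  | succ n => simp [Aprod]

lemma Aprod_succ {N : ℕ} (A : ℕ → Matrix (Fin N) (Fin N) ℝ) {i j : ℕ} (hji : j ≤ i) :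
    Aprod A (i + 1) j = A (i + 1) * Aprod A i j := by
  simp [Aprod, hji]

lemma mulVec_finsum {N : ℕ} (M : Matrix (Fin N) (Fin N) ℝ) {α : Type*} (s : Finset α)
    (f : α → Fin N → ℝ) : M *ᵥ (∑ j ∈ s, f j) = ∑ j ∈ s, M *ᵥ f j :=
  map_sum M.mulVecLin f s

lemma dot_finsum {N : ℕ} (v : Fin N → ℝ) {α : Type*} (s : Finset α)
    (f : α → Fin N → ℝ) : v ⬝ᵥ (∑ j ∈ s, f j) = ∑ j ∈ s, v ⬝ᵥ f j := by
  simp [dotProduct, Finset.mul_sum]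
  exact Finset.sum_comm

/-- A time-varying state space model acts on its input as multiplication by
the parametric `N`-semiseparable mixer matrix: with `h 0 = x 0 • b 0`,
`h (t+1) = A (t+1) h t + x (t+1) • b (t+1)` and `y t = c tᵀ h t`, we have `y = S x`. -/
theorem ssm_is_semiseparable_mixer {L N : ℕ} (hL : 1 ≤ L)
    (A : ℕ → Matrix (Fin N) (Fin N) ℝ) (b c : ℕ → Fin N → ℝ)
    (x : Fin L → ℝ) (h : ℕ → Fin N → ℝ)
    (h0 : h 0 = x ⟨0, hL⟩ • b 0)
    (hrec : ∀ t (ht : t + 1 < L), h (t + 1) = (A (t + 1)) *ᵥ h t + x ⟨t + 1, ht⟩ • b (t + 1)) :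
    ∀ i : Fin L, c (i : ℕ) ⬝ᵥ h (i : ℕ) = (semisep L A b c *ᵥ x) i := by
  set x' : ℕ → ℝ := fun j => if hj : j < L then x ⟨j, hj⟩ else 0 with hx'
  have hx'eq : ∀ j : Fin L, x' (j : ℕ) = x j := by
    intro j; simp [hx', j.isLt]
  have key : ∀ t, t < L →
      h t = ∑ j ∈ Finset.range (t + 1), x' j • (Aprod A t j) *ᵥ b j := by
    intro t
    induction t with
    | zero =>
      intro ht
      simp [h0, hx', Aprod_self, show (0:ℕ) < L from hL]
    | succ n ih =>
      intro hn
      have hnL : n < L := Nat.lt_of_succ_lt hn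
      rw [hrec n hn, ih hnL, mulVec_finsum,
        Finset.sum_range_succ (f := fun j => x' j • (Aprod A (n+1) j) *ᵥ b j)]
      congr 1
      · refine Finset.sum_congr rfl fun j hj => ?_
        have hjn : j ≤ n := Nat.lt_succ_iff.mp (Finset.mem_range.mp hj)
        rw [Matrix.mulVec_smul, Aprod_succ A hjn, ← Matrix.mulVec_mulVec]
      · rw [Aprod_self]
        simp [hx', hn]
  intro i
  have hi : (i : ℕ) < L := i.isLt
  rw [key i hi, dot_finsum]
  have hrhs : (semisep L A b c *ᵥ x) i
      = ∑ j ∈ Finset.range L,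
          (if j ≤ (i : ℕ) then c (i : ℕ) ⬝ᵥ (Aprod A (i : ℕ) j) *ᵥ b j else 0) * x' j := by
    rw [Matrix.mulVec, ← Fin.sum_univ_eq_sum_range
      (fun j => (if j ≤ (i : ℕ) then c (i : ℕ) ⬝ᵥ (Aprod A (i : ℕ) j) *ᵥ b j else 0) * x' j) L]
    refine Finset.sum_congr rfl fun j _ => ?_
    rw [hx'eq j]
    rfl
  rw [hrhs, ← Finset.sum_subset (Finset.range_subset_range.mpr hi)]
  · refine Finset.sum_congr rfl fun j hj => ?_
    have hji : j ≤ (i : ℕ) := Nat.lt_succ_iff.mp (Finset.mem_range.mp hj)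
    rw [if_pos hji, dotProduct_smul, smul_eq_mul]
    ring
  · intro j _ hj
    have : ¬ j ≤ (i : ℕ) := by
      simpa [Nat.lt_succ_iff] using fun hle => hj (Finset.mem_range.mpr (Nat.lt_succ_of_le hle))
    rw [if_neg this, zero_mul]
end

section
/- Let S be a parametric N-semiseparable L×L real matrix. Then every submatrix of S taken from the lower triangle (on or below the diagonal) has rank at most N: for all p, q and all index maps r : Fin p → Fin L, s : Fin q → Fin L satisfying s(b) ≤ r(a) for all a, b, the p×q matrix (S_{r(a),s(b)})_{a,b} has rank at most N. -/
open Matrix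

lemma Aprod_split {N : ℕ} (A : ℕ → Matrix (Fin N) (Fin N) ℝ) {i m j : ℕ}
    (hjm : j ≤ m) (hmi : m ≤ i) : Aprod A i j = Aprod A i m * Aprod A m j := by
  induction i with
  | zero =>
    have : m = 0 := Nat.le_zero.mp hmi
    subst this
    simp [Aprod_self]
  | succ i ih =>
    rcases eq_or_lt_of_le hmi with h | h
    · subst h
      simp [Aprod_self]
    · have hmi' : m ≤ i := Nat.lt_succ_iff.mp h
      have hji : j ≤ i := le_trans hjm hmi'
      simp [Aprod, hji, hmi', ih hmi', Matrix.mul_assoc]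

/-- Every submatrix of a parametric `N`-semiseparable matrix taken from the
lower triangle (on or below the diagonal) has rank at most `N`. -/
theorem semisep_lower_submatrix_rank_le {L N : ℕ}
    (A : ℕ → Matrix (Fin N) (Fin N) ℝ) (b c : ℕ → Fin N → ℝ)
    (p q : ℕ) (r : Fin p → Fin L) (s : Fin q → Fin L)
    (hrs : ∀ a b', (s b' : ℕ) ≤ (r a : ℕ)) :
    (Matrix.of fun a b' => semisep L A b c (r a) (s b')).rank ≤ N := by
  set m : ℕ := Finset.univ.sup (fun b' : Fin q => (s b' : ℕ)) with hm
  have hsm : ∀ b', (s b' : ℕ) ≤ m := fun b' =>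
    Finset.le_sup (f := fun b' : Fin q => (s b' : ℕ)) (Finset.mem_univ b')
  have hmr : ∀ a, m ≤ (r a : ℕ) := fun a => Finset.sup_le fun b' _ => hrs a b'
  set U : Matrix (Fin p) (Fin N) ℝ :=
    Matrix.of fun a n => (c (r a : ℕ) ᵥ* Aprod A (r a : ℕ) m) n with hU
  set V : Matrix (Fin N) (Fin q) ℝ :=
    Matrix.of fun n b' => ((Aprod A m (s b' : ℕ)) *ᵥ b (s b' : ℕ)) n with hV
  have key : (Matrix.of fun a b' => semisep L A b c (r a) (s b')) = U * V := by
    ext a b'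
    simp only [Matrix.of_apply, semisep, hrs a b', if_true, Matrix.mul_apply]
    rw [Aprod_split A (hsm b') (hmr a)]
    rw [← Matrix.mulVec_mulVec, Matrix.dotProduct_mulVec]
    simp [hU, hV, dotProduct, Matrix.mul_apply]
  rw [key]
  calc (U * V).rank ≤ V.rank := Matrix.rank_mul_le_right U V
    _ ≤ Fintype.card (Fin N) := Matrix.rank_le_card_height V
    _ = N := Fintype.card_fin N
end

section
/- Let M* be the 3×3 real matrix whose off-diagonal entries all equal 1 and whose diagonal is (0, 5, 0). Then M* is rank-characterized 1-quasiseparable, but M* is not equal to any addition-based bidirectional SSM matrix of order 1 (i.e., for no choice of scalar forward and backward parameters does the addition-based matrix equal M*). Hence quasiseparable matrices are strictly more expressive than addition-based bidirectional SSM matrices. -/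
open Matrix

/-- The addition-based bidirectional SSM matrix of order `N` and size `L`: the sum of a
forward parametric semiseparable SSM and a reversed backward one, with diagonal entries
`cfᵢᵀ bfᵢ + cbᵢᵀ bbᵢ`. -/
def addBidir (L : ℕ) {N : ℕ} (Af : ℕ → Matrix (Fin N) (Fin N) ℝ) (bf cf : ℕ → Fin N → ℝ)
    (Ab : ℕ → Matrix (Fin N) (Fin N) ℝ) (bb cb : ℕ → Fin N → ℝ) :
    Matrix (Fin L) (Fin L) ℝ :=
  Matrix.of fun i j =>
    if (j : ℕ) < (i : ℕ) then cf (i : ℕ) ⬝ᵥ (Aprod Af (i : ℕ) (j : ℕ)) *ᵥ bf (j : ℕ)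
    else if (i : ℕ) = (j : ℕ) then cf (i : ℕ) ⬝ᵥ bf (i : ℕ) + cb (i : ℕ) ⬝ᵥ bb (i : ℕ)
    else cb (j : ℕ) ⬝ᵥ (Aprod Ab (j : ℕ) (i : ℕ)) *ᵥ bb (i : ℕ)
/-- Rank characterization of `N`-quasiseparability: every submatrix taken strictly below the
diagonal has rank at most `N`, and every submatrix taken strictly above the diagonal has
rank at most `N`. -/
def RCQuasisep {L : ℕ} (N : ℕ) (M : Matrix (Fin L) (Fin L) ℝ) : Prop :=
  (∀ (p q : ℕ) (r : Fin p → Fin L) (s : Fin q → Fin L),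
      (∀ a b, (s b : ℕ) < (r a : ℕ)) →
      (Matrix.of fun a b => M (r a) (s b)).rank ≤ N) ∧
  (∀ (p q : ℕ) (r : Fin p → Fin L) (s : Fin q → Fin L),
      (∀ a b, (r a : ℕ) < (s b : ℕ)) →
      (Matrix.of fun a b => M (r a) (s b)).rank ≤ N)

/-- The `3 × 3` matrix whose off-diagonal entries all equal `1` and whose diagonal is
`(0, 5, 0)`. -/
def Mstar : Matrix (Fin 3) (Fin 3) ℝ := !![0, 1, 1; 1, 5, 1; 1, 1, 0]


lemma Mstar_ne (i j : Fin 3) (h : (i:ℕ) ≠ j) : Mstar i j = 1 := by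
  fin_cases i <;> fin_cases j <;> simp_all [Mstar, Matrix.vecHead, Matrix.vecTail]

lemma rank_ones {p q : ℕ} : (Matrix.of fun (_ : Fin p) (_ : Fin q) => (1:ℝ)).rank ≤ 1 := by
  have h : (Matrix.of fun (_ : Fin p) (_ : Fin q) => (1:ℝ)) =
      (Matrix.of fun (_ : Fin p) (_ : Fin 1) => (1:ℝ)) *
      (Matrix.of fun (_ : Fin 1) (_ : Fin q) => (1:ℝ)) := by
    ext a b; simp [Matrix.mul_apply]
  calc _ ≤ (Matrix.of fun (_ : Fin p) (_ : Fin 1) => (1:ℝ)).rank := by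
        rw [h]; exact Matrix.rank_mul_le_left _ _
    _ ≤ 1 := by simpa using Matrix.rank_le_card_width (Matrix.of fun (_ : Fin p) (_ : Fin 1) => (1:ℝ))

/-- `Mstar` is rank-characterized `1`-quasiseparable, but it is not equal
to any addition-based bidirectional SSM matrix of order `1`: quasiseparable matrices are
strictly more expressive than addition-based bidirectional SSM matrices. -/
theorem quasisep_strictly_more_expressive_than_addBidir :
    RCQuasisep 1 Mstar ∧
    ∀ (Af : ℕ → Matrix (Fin 1) (Fin 1) ℝ) (bf cf : ℕ → Fin 1 → ℝ)
      (Ab : ℕ → Matrix (Fin 1) (Fin 1) ℝ) (bb cb : ℕ → Fin 1 → ℝ),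
      addBidir 3 Af bf cf Ab bb cb ≠ Mstar := by
  
  constructor
  · constructor
    · intro p q r s hlt
      have : (Matrix.of fun a b => Mstar (r a) (s b)) =
          (Matrix.of fun (_ : Fin p) (_ : Fin q) => (1:ℝ)) := by
        ext a b
        exact Mstar_ne _ _ (Nat.ne_of_gt (hlt a b))
      rw [this]; exact rank_ones
    · intro p q r s hlt
      have : (Matrix.of fun a b => Mstar (r a) (s b)) =
          (Matrix.of fun (_ : Fin p) (_ : Fin q) => (1:ℝ)) := by
        ext a b
        exact Mstar_ne _ _ (Nat.ne_of_lt (hlt a b))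
      rw [this]; exact rank_ones
  · intro Af bf cf Ab bb cb heq
    have e10 := congrFun (congrFun heq 1) 0
    have e20 := congrFun (congrFun heq 2) 0
    have e21 := congrFun (congrFun heq 2) 1
    have e01 := congrFun (congrFun heq 0) 1
    have e02 := congrFun (congrFun heq 0) 2
    have e12 := congrFun (congrFun heq 1) 2
    have e11 := congrFun (congrFun heq 1) 1
    simp [addBidir, Aprod, Mstar, mulVec, dotProduct, Fin.sum_univ_one,
      Matrix.mul_apply, Matrix.vecHead, Matrix.vecTail] at e10 e20 e21 e01 e02 e12 e11
    have hx : cf 1 0 * bf 1 0 = 1 := by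
      have h1 : (cf 1 0 * (Af 1 0 0 * bf 0 0)) * (cf 2 0 * (Af 2 0 0 * bf 1 0)) = 1 := by
        rw [e10, e21]; ring
      linear_combination h1 - (cf 1 0 * bf 1 0) * e20
    have hy : cb 1 0 * bb 1 0 = 1 := by
      have h1 : (cb 1 0 * (Ab 1 0 0 * bb 0 0)) * (cb 2 0 * (Ab 2 0 0 * bb 1 0)) = 1 := by
        rw [e01, e12]; ring
      linear_combination h1 - (cb 1 0 * bb 1 0) * e02
    linarith [e11]
end
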